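/- Given 0 < ε < 1 and n ∈ ℕ with n ≥ 1, define ε_n = ε / ((n+1)! · max_{1≤k≤n+1} S(n+1,k)) and δ = ln((1-ε_n)/ε_n). Then for every real x with |x| > δ and every m with 1 ≤ m ≤ n, the m-th derivative of the logistic function satisfies |σ^(m)(x)| < ε. -/

import Mathlib

/-- The logistic function. -/
noncomputable def logistic (x : ℝ) : ℝ := 1 / (1 + Real.exp (-x))

/-- Stirling numbers of the second kind. -/
def stirling2 : ℕ → ℕ → ℕ
  | 0, 0 => 1
  | 0, _ + 1 => 0
  | _ + 1, 0 => 0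
  | m + 1, n + 1 => (n + 1) * stirling2 m (n + 1) + stirling2 m n

/-!
Since `σ' = σ - σ²`, each derivative `σ⁽ᵐ⁾` is the polynomial
`∑ₖ (-1)^(k+1) (k-1)! S(m+1,k) σ^k` in `σ`, with no constant term. On `[0, 1]` it is therefore
bounded by `(m+1)! · maxₖ S(m+1,k) · σ`, and `σ(x) < εₙ` exactly when `x < -δ`. For `x > δ` the
symmetry `σ(-x) = 1 - σ(x)` gives `|σ⁽ᵐ⁾(x)| = |σ⁽ᵐ⁾(-x)|`.
-/

open Finset Real

theorem stirling2_eq_stirlingSecond : stirling2 = Nat.stirlingSecond := by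
  funext m k
  induction m generalizing k with
  | zero => cases k <;> rfl
  | succ m ih => cases k <;> simp [stirling2, Nat.stirlingSecond, ih]

theorem logistic_eq_sigmoid : logistic = sigmoid := by
  funext x
  rw [logistic, sigmoid_def, one_div]

theorem Nat.stirlingSecond_mono_left {k : ℕ} (hk : k ≠ 0) :
    Monotone fun n ↦ Nat.stirlingSecond n k :=
  monotone_nat_of_le_succ fun n ↦ by
    rw [Nat.stirlingSecond_succ_left n k hk]
    nlinarith [Nat.one_le_iff_ne_zero.mpr hk]

def sigmoidDerivCoeff (m k : ℕ) : ℤ :=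
  (-1) ^ (k + 1) * (k - 1).factorial * Nat.stirlingSecond (m + 1) k

theorem sigmoidDerivCoeff_zero_right (m : ℕ) : sigmoidDerivCoeff m 0 = 0 := by
  simp [sigmoidDerivCoeff]

theorem sigmoidDerivCoeff_of_lt {m k : ℕ} (hk : m + 1 < k) : sigmoidDerivCoeff m k = 0 := by
  simp [sigmoidDerivCoeff, Nat.stirlingSecond_eq_zero_of_lt hk]

theorem sigmoidDerivCoeff_succ_succ (m k : ℕ) :
    sigmoidDerivCoeff (m + 1) (k + 1) =
      (k + 1) * sigmoidDerivCoeff m (k + 1) - k * sigmoidDerivCoeff m k := by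
  cases k with
  | zero => simp [sigmoidDerivCoeff, Nat.stirlingSecond_one_right]
  | succ k =>
    simp only [sigmoidDerivCoeff, Nat.add_sub_cancel, Nat.stirlingSecond_succ_succ (m + 1) (k + 1),
      Nat.factorial_succ]
    push_cast
    ring

theorem abs_sigmoidDerivCoeff (m k : ℕ) :
    |(sigmoidDerivCoeff m k : ℝ)| = (k - 1).factorial * Nat.stirlingSecond (m + 1) k := by
  simp [sigmoidDerivCoeff, abs_mul]

noncomputable def sigmoidDerivPoly (m : ℕ) (s : ℝ) : ℝ :=
  ∑ k ∈ range (m + 2), (sigmoidDerivCoeff m k : ℝ) * s ^ k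

/-- Differentiating `σ ^ k` gives `k (σ ^ k - σ ^ (k + 1))`, so the polynomials satisfy this
recursion. -/
theorem sum_sigmoidDerivCoeff_mul_sub (m : ℕ) (s : ℝ) :
    ∑ k ∈ range (m + 2), (sigmoidDerivCoeff m k : ℝ) * (k * (s ^ k - s ^ (k + 1))) =
      sigmoidDerivPoly (m + 1) s := by
  set a : ℕ → ℝ := fun k ↦ k * sigmoidDerivCoeff m k
  have hshift : ∑ k ∈ range (m + 2), a (k + 1) * s ^ (k + 1) =
      ∑ k ∈ range (m + 2), a k * s ^ k := by
    have h := sum_range_succ' (fun k ↦ a k * s ^ k) (m + 2)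
    rw [sum_range_succ] at h
    simp only [a, sigmoidDerivCoeff_of_lt (by omega : m + 1 < m + 2), Nat.cast_zero, zero_mul,
      Int.cast_zero, mul_zero, add_zero] at h
    exact h.symm
  calc ∑ k ∈ range (m + 2), (sigmoidDerivCoeff m k : ℝ) * (k * (s ^ k - s ^ (k + 1)))
      = ∑ k ∈ range (m + 2), a k * s ^ k - ∑ k ∈ range (m + 2), a k * s ^ (k + 1) := by
        rw [← sum_sub_distrib]
        exact sum_congr rfl fun k _ ↦ by ring
    _ = ∑ k ∈ range (m + 2), (a (k + 1) - a k) * s ^ (k + 1) := by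
        rw [← hshift, ← sum_sub_distrib]
        exact sum_congr rfl fun k _ ↦ by ring
    _ = sigmoidDerivPoly (m + 1) s := by
        rw [sigmoidDerivPoly, sum_range_succ' _ (m + 2), sigmoidDerivCoeff_zero_right]
        simp only [sigmoidDerivCoeff_succ_succ, a, Int.cast_zero, zero_mul, add_zero]
        push_cast
        exact sum_congr rfl fun k _ ↦ by ring

theorem hasDerivAt_sigmoid_pow (k : ℕ) (x : ℝ) :
    HasDerivAt (fun y ↦ sigmoid y ^ k) (k * (sigmoid x ^ k - sigmoid x ^ (k + 1))) x := by
  refine ((hasDerivAt_sigmoid x).fun_pow k).congr_deriv ?_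
  cases k with
  | zero => simp
  | succ k => push_cast; ring

theorem iteratedDeriv_sigmoid (m : ℕ) (x : ℝ) :
    iteratedDeriv m sigmoid x = sigmoidDerivPoly m (sigmoid x) := by
  induction m generalizing x with
  | zero => simp [sigmoidDerivPoly, sum_range_succ, sigmoidDerivCoeff, Nat.stirlingSecond_self]
  | succ m ih =>
    have hderiv : HasDerivAt (fun y ↦ sigmoidDerivPoly m (sigmoid y))
        (sigmoidDerivPoly (m + 1) (sigmoid x)) x := by
      rw [← sum_sigmoidDerivCoeff_mul_sub]
      exact HasDerivAt.fun_sum fun k _ ↦ (hasDerivAt_sigmoid_pow k x).const_mul _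
    rw [iteratedDeriv_succ, funext ih, hderiv.deriv]

theorem abs_iteratedDeriv_sigmoid_neg {m : ℕ} (hm : 0 < m) (x : ℝ) :
    |iteratedDeriv m sigmoid (-x)| = |iteratedDeriv m sigmoid x| := by
  have h := iteratedDeriv_comp_neg m sigmoid x
  simp only [sigmoid_neg, iteratedDeriv_const_sub hm, iteratedDeriv_neg, smul_eq_mul] at h
  rw [← abs_neg (iteratedDeriv m sigmoid x), h, abs_mul, abs_pow, abs_neg, abs_one, one_pow, one_mul]

/-- Every term has `k ≥ 1`, so on `[0, 1]` it is at most `s` times its coefficient. -/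
theorem abs_sigmoidDerivPoly_le {m B : ℕ}
    (hB : ∀ k ∈ Icc 1 (m + 1), Nat.stirlingSecond (m + 1) k ≤ B) {s : ℝ} (hs0 : 0 ≤ s)
    (hs1 : s ≤ 1) : |sigmoidDerivPoly m s| ≤ (m + 1).factorial * B * s := by
  have hterm : ∀ k ∈ range (m + 1),
      |(sigmoidDerivCoeff m (k + 1) : ℝ) * s ^ (k + 1)| ≤ m.factorial * B * s := by
    intro k hk
    have hkm : k ≤ m := Nat.lt_succ_iff.mp (mem_range.mp hk)
    have hfac : (k.factorial : ℝ) ≤ m.factorial := by exact_mod_cast Nat.factorial_le hkm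
    have hS : (Nat.stirlingSecond (m + 1) (k + 1) : ℝ) ≤ B := by
      exact_mod_cast hB (k + 1) (mem_Icc.mpr ⟨by omega, by omega⟩)
    have hpow : s ^ (k + 1) ≤ s := pow_le_of_le_one hs0 hs1 k.succ_ne_zero
    rw [abs_mul, abs_sigmoidDerivCoeff, abs_pow, abs_of_nonneg hs0, Nat.add_sub_cancel]
    gcongr
  calc |sigmoidDerivPoly m s|
      ≤ ∑ k ∈ range (m + 2), |(sigmoidDerivCoeff m k : ℝ) * s ^ k| := abs_sum_le_sum_abs _ _
    _ = ∑ k ∈ range (m + 1), |(sigmoidDerivCoeff m (k + 1) : ℝ) * s ^ (k + 1)| := by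
        simp [sum_range_succ' _ (m + 1), sigmoidDerivCoeff_zero_right]
    _ ≤ ∑ k ∈ range (m + 1), (m.factorial * B * s : ℝ) := sum_le_sum hterm
    _ = (m + 1).factorial * B * s := by
        rw [sum_const, card_range, nsmul_eq_mul, Nat.factorial_succ]
        push_cast
        ring

theorem abs_iteratedDeriv_sigmoid_le {m B : ℕ} (hm : 0 < m)
    (hB : ∀ k ∈ Icc 1 (m + 1), Nat.stirlingSecond (m + 1) k ≤ B) (x : ℝ) :
    |iteratedDeriv m sigmoid x| ≤ (m + 1).factorial * B * sigmoid (-|x|) := by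
  have hneg : ∀ y ≤ 0, |iteratedDeriv m sigmoid y| ≤ (m + 1).factorial * B * sigmoid y := by
    intro y _
    rw [iteratedDeriv_sigmoid]
    exact abs_sigmoidDerivPoly_le hB (sigmoid_nonneg y) (sigmoid_le_one y)
  rcases le_total 0 x with hx | hx
  · rw [abs_of_nonneg hx, ← abs_iteratedDeriv_sigmoid_neg hm]
    exact hneg (-x) (by linarith)
  · rw [abs_of_nonpos hx, neg_neg]
    exact hneg x hx

theorem stirlingSecond_le_sup_Icc {m n k : ℕ} (hmn : m ≤ n) (hk : k ∈ Icc 1 (m + 1)) :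
    Nat.stirlingSecond (m + 1) k ≤ (Icc 1 (n + 1)).sup (Nat.stirlingSecond (n + 1)) := by
  obtain ⟨hk1, hkm⟩ := mem_Icc.mp hk
  exact (Nat.stirlingSecond_mono_left (by omega) (by omega : m + 1 ≤ n + 1)).trans
    (le_sup (mem_Icc.mpr ⟨hk1, by omega⟩))

theorem one_le_sup_Icc_stirlingSecond (n : ℕ) :
    1 ≤ (Icc 1 (n + 1)).sup (Nat.stirlingSecond (n + 1)) := by
  simpa [Nat.stirlingSecond_one_right] using
    le_sup (f := Nat.stirlingSecond (n + 1)) (left_mem_Icc.mpr (by omega : 1 ≤ n + 1))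

theorem sigmoid_neg_log_div {e : ℝ} (he0 : 0 < e) (he1 : e < 1) :
    sigmoid (-log ((1 - e) / e)) = e := by
  rw [sigmoid_def, neg_neg, exp_log (div_pos (by linarith) he0)]
  field_simp
  ring

theorem stmt_11_general (ε : ℝ) (hε0 : 0 < ε) (n : ℕ)
    (εn δ : ℝ)
    (hεn : εn = ε / (((n + 1).factorial : ℝ) *
      (((Finset.Icc 1 (n + 1)).sup (stirling2 (n + 1)) : ℕ) : ℝ)))
    (hεn2 : εn < 1 / 2)
    (hδ : δ = Real.log ((1 - εn) / εn)) :
    ∀ x : ℝ, |x| > δ → ∀ m : ℕ, 1 ≤ m → m ≤ n → |iteratedDeriv m logistic x| < ε := by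
  intro x hx m hm hmn
  rw [stirling2_eq_stirlingSecond] at hεn
  set B := (Icc 1 (n + 1)).sup (Nat.stirlingSecond (n + 1))
  have hB : (0 : ℝ) < B := by exact_mod_cast one_le_sup_Icc_stirlingSecond n
  have hεn0 : 0 < εn := by rw [hεn]; positivity
  have hσ : sigmoid (-|x|) < εn := by
    rw [← sigmoid_neg_log_div hεn0 (by linarith), ← hδ]
    exact sigmoid_strictMono (by linarith)
  have hfac : ((m + 1).factorial : ℝ) ≤ (n + 1).factorial := by
    exact_mod_cast Nat.factorial_le (by omega)
  rw [logistic_eq_sigmoid]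
  calc |iteratedDeriv m sigmoid x|
      ≤ (m + 1).factorial * B * sigmoid (-|x|) :=
        abs_iteratedDeriv_sigmoid_le hm (fun k hk ↦ stirlingSecond_le_sup_Icc hmn hk) x
    _ ≤ (n + 1).factorial * B * sigmoid (-|x|) := by gcongr; exact (sigmoid_pos _).le
    _ < (n + 1).factorial * B * εn := by gcongr
    _ = ε := by rw [hεn]; field_simp

theorem stmt_11 (ε : ℝ) (hε0 : 0 < ε) (hε1 : ε < 1) (n : ℕ) (hn : 1 ≤ n)
    (εn δ : ℝ)
    (hεn : εn = ε / (((n + 1).factorial : ℝ) *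
      (((Finset.Icc 1 (n + 1)).sup (stirling2 (n + 1)) : ℕ) : ℝ)))
    (hεn2 : εn < 1 / 2)
    (hδ : δ = Real.log ((1 - εn) / εn)) :
    ∀ x : ℝ, |x| > δ → ∀ m : ℕ, 1 ≤ m → m ≤ n → |iteratedDeriv m logistic x| < ε :=
  stmt_11_general ε hε0 n εn δ hεn hεn2 hδ
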